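/- arXiv:1904.07932 — 5 statements merged into one kernel-verified Lean document; each statement's English description precedes it below -/
import Mathlib

section
/- Let n ∈ ℕ and let M be a real (n+1)×(n+1) tridiagonal matrix (M(a,b) = 0 whenever |a−b| > 1) satisfying M(a,a+1)·M(a+1,a) > 0 for every 0 ≤ a ≤ n−1. Then M is diagonalizable over ℝ (there exist an invertible real matrix P and a real diagonal matrix D with M = P D P⁻¹), and every complex eigenvalue of M (every root of its characteristic polynomial over ℂ) is real. -/
open Polynomial Matrix

/-- Similar matrices have equal characteristic polynomials. -/
lemma charpoly_conj_aux {m : Type*} [Fintype m] [DecidableEq m]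
    (P A : Matrix m m ℝ) (h : IsUnit P.det) :
    (P * A * P⁻¹).charpoly = A.charpoly := by
  have h1 : P * P⁻¹ = 1 := Matrix.mul_nonsing_inv _ h
  have hmap : (P.map C) * (P⁻¹.map C) = 1 := by
    rw [← Matrix.map_mul, h1]
    simp
  have key : charmatrix (P * A * P⁻¹) = P.map C * charmatrix A * P⁻¹.map C := by
    unfold charmatrix
    simp only [RingHom.mapMatrix_apply]
    rw [Matrix.mul_sub, Matrix.sub_mul]
    congr 1
    · rw [Matrix.scalar_apply]
      symm
      rw [Matrix.mul_assoc, ← Matrix.smul_eq_diagonal_mul, Matrix.mul_smul, hmap,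
        Matrix.smul_eq_diagonal_mul, Matrix.mul_one]
    · rw [Matrix.map_mul, Matrix.map_mul, Matrix.mul_assoc]
  unfold Matrix.charpoly
  rw [key, Matrix.det_mul, Matrix.det_mul]
  have : (P.map C).det * (P⁻¹.map C).det = 1 := by
    rw [← Matrix.det_mul, hmap, Matrix.det_one]
  calc (P.map C).det * (charmatrix A).det * (P⁻¹.map C).det
      = (charmatrix A).det * ((P.map C).det * (P⁻¹.map C).det) := by ring
    _ = (charmatrix A).det := by rw [this, mul_one]

/-- The scaling sequence used to symmetrize a tridiagonal matrix. -/
noncomputable def tdvec (n : ℕ) (M : Matrix (Fin (n + 1)) (Fin (n + 1)) ℝ) : ℕ → ℝ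
  | 0 => 1
  | k + 1 =>
    tdvec n M k * Real.sqrt (if h : k < n then
      M ⟨k + 1, Nat.succ_lt_succ h⟩ ⟨k, Nat.lt_succ_of_lt h⟩ /
      M ⟨k, Nat.lt_succ_of_lt h⟩ ⟨k + 1, Nat.succ_lt_succ h⟩ else 1)

/-- A real tridiagonal matrix whose paired off-diagonal entries have
positive products is diagonalizable over ℝ, and every complex root of its
characteristic polynomial is real. -/
theorem tridiagonal_diagonalizable_real_eigenvalues (n : ℕ)
    (M : Matrix (Fin (n + 1)) (Fin (n + 1)) ℝ)
    (htri : ∀ a b : Fin (n + 1), 1 < ((a : ℤ) - (b : ℤ)).natAbs → M a b = 0)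
    (hpos : ∀ a : Fin n, 0 < M a.castSucc a.succ * M a.succ a.castSucc) :
    (∃ P : Matrix (Fin (n + 1)) (Fin (n + 1)) ℝ, ∃ dvec : Fin (n + 1) → ℝ,
        IsUnit P.det ∧ M = P * Matrix.diagonal dvec * P⁻¹) ∧
    (∀ z : ℂ, Polynomial.aeval z M.charpoly = 0 → z.im = 0) := by
  classical
  -- ratio positivity
  have hratio : ∀ (k : ℕ) (h : k < n),
      0 < M ⟨k + 1, Nat.succ_lt_succ h⟩ ⟨k, Nat.lt_succ_of_lt h⟩ /
        M ⟨k, Nat.lt_succ_of_lt h⟩ ⟨k + 1, Nat.succ_lt_succ h⟩ := by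
    intro k h
    have hp := hpos ⟨k, h⟩
    have hc : (⟨k, h⟩ : Fin n).castSucc = (⟨k, Nat.lt_succ_of_lt h⟩ : Fin (n+1)) := rfl
    have hs : (⟨k, h⟩ : Fin n).succ = (⟨k + 1, Nat.succ_lt_succ h⟩ : Fin (n+1)) := rfl
    rw [hc, hs] at hp
    set x := M ⟨k, Nat.lt_succ_of_lt h⟩ ⟨k + 1, Nat.succ_lt_succ h⟩
    set y := M ⟨k + 1, Nat.succ_lt_succ h⟩ ⟨k, Nat.lt_succ_of_lt h⟩
    have hx : x ≠ 0 := by intro h0; rw [h0, zero_mul] at hp; exact lt_irrefl 0 hp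
    have : y / x = x * y / x ^ 2 := by field_simp
    rw [this]
    positivity
  -- positivity of the scaling sequence
  have hdpos : ∀ k : ℕ, 0 < tdvec n M k := by
    intro k
    induction k with
    | zero => norm_num [tdvec]
    | succ k ih =>
      rw [tdvec]
      apply mul_pos ih
      apply Real.sqrt_pos.mpr
      by_cases h : k < n
      · rw [dif_pos h]; exact hratio k h
      · rw [dif_neg h]; norm_num
  set d : Fin (n + 1) → ℝ := fun i => tdvec n M i.val with hd
  have hdpos' : ∀ i, 0 < d i := fun i => hdpos i.val
  have hdne : ∀ i, d i ≠ 0 := fun i => (hdpos' i).ne'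
  -- key symmetrization identity
  have hkey : ∀ i j : Fin (n + 1), d j ^ 2 * M i j = d i ^ 2 * M j i := by
    have base : ∀ (k : ℕ) (h : k < n),
        tdvec n M (k+1) ^ 2 * M ⟨k, Nat.lt_succ_of_lt h⟩ ⟨k + 1, Nat.succ_lt_succ h⟩ =
        tdvec n M k ^ 2 * M ⟨k + 1, Nat.succ_lt_succ h⟩ ⟨k, Nat.lt_succ_of_lt h⟩ := by
      intro k h
      set x := M ⟨k, Nat.lt_succ_of_lt h⟩ ⟨k + 1, Nat.succ_lt_succ h⟩ with hx
      set y := M ⟨k + 1, Nat.succ_lt_succ h⟩ ⟨k, Nat.lt_succ_of_lt h⟩ with hy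
      have hr : 0 < y / x := hratio k h
      have hxne : x ≠ 0 := by
        intro h0
        rw [h0, div_zero] at hr; exact lt_irrefl 0 hr
      have hsq : Real.sqrt (y / x) ^ 2 = y / x := Real.sq_sqrt hr.le
      rw [tdvec, dif_pos h, mul_pow, hsq]
      field_simp
    intro i j
    rcases lt_trichotomy i.val j.val with hlt | heq | hgt
    · rcases Nat.lt_or_ge (i.val + 1) j.val with h2 | h2
      · have h1 : M i j = 0 := by
          apply htri; omega
        have h2' : M j i = 0 := by
          apply htri; omega
        rw [h1, h2', mul_zero, mul_zero]
      · have hj : j.val = i.val + 1 := by omega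
        have hin : i.val < n := by omega
        have hj' : j = (⟨i.val + 1, Nat.succ_lt_succ hin⟩ : Fin (n+1)) := Fin.ext hj
        subst hj'
        exact base i.val hin
    · have : i = j := Fin.ext heq
      rw [this]
    · rcases Nat.lt_or_ge (j.val + 1) i.val with h2 | h2
      · have h1 : M i j = 0 := by apply htri; omega
        have h2' : M j i = 0 := by apply htri; omega
        rw [h1, h2', mul_zero, mul_zero]
      · have hi : i.val = j.val + 1 := by omega
        have hjn : j.val < n := by omega
        have hi' : i = (⟨j.val + 1, Nat.succ_lt_succ hjn⟩ : Fin (n+1)) := Fin.ext hi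
        subst hi'
        exact (base j.val hjn).symm
  -- the symmetrized matrix
  set S : Matrix (Fin (n + 1)) (Fin (n + 1)) ℝ :=
    Matrix.diagonal (fun i => (d i)⁻¹) * M * Matrix.diagonal d with hS
  have hSapply : ∀ i j, S i j = (d i)⁻¹ * M i j * d j := by
    intro i j
    rw [hS, Matrix.mul_apply]
    simp [Matrix.mul_apply, Matrix.diagonal_apply, Finset.sum_ite_eq, Finset.sum_ite_eq']
  have hherm : S.IsHermitian := by
    rw [Matrix.IsHermitian]
    ext i j
    rw [Matrix.conjTranspose_apply, star_trivial, hSapply, hSapply]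
    have h1 := hkey i j
    have hi0 := hdne i
    have hj0 := hdne j
    field_simp
    linear_combination -h1
  -- spectral theorem
  have hspec := hherm.spectral_theorem
  set U : Matrix (Fin (n + 1)) (Fin (n + 1)) ℝ :=
    (hherm.eigenvectorUnitary : Matrix (Fin (n + 1)) (Fin (n + 1)) ℝ) with hU
  set dvec : Fin (n + 1) → ℝ := RCLike.ofReal ∘ hherm.eigenvalues with hdvec
  have hUU : U * star U = 1 := Matrix.mem_unitaryGroup_iff.mp hherm.eigenvectorUnitary.2
  have hDD : Matrix.diagonal d * Matrix.diagonal (fun i => (d i)⁻¹) = 1 := by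
    rw [Matrix.diagonal_mul_diagonal,
      show (fun i => d i * (d i)⁻¹) = fun _ => (1 : ℝ) from
        funext fun i => mul_inv_cancel₀ (hdne i), Matrix.diagonal_one]
  have hMrec : M = Matrix.diagonal d * S * Matrix.diagonal (fun i => (d i)⁻¹) := by
    rw [hS]
    simp only [← Matrix.mul_assoc]
    rw [hDD, Matrix.one_mul, Matrix.mul_assoc, hDD, Matrix.mul_one]
  set P : Matrix (Fin (n + 1)) (Fin (n + 1)) ℝ := Matrix.diagonal d * U with hP
  set Q : Matrix (Fin (n + 1)) (Fin (n + 1)) ℝ :=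
    star U * Matrix.diagonal (fun i => (d i)⁻¹) with hQ
  have hPQ : P * Q = 1 := by
    rw [hP, hQ]
    simp only [← Matrix.mul_assoc]
    rw [Matrix.mul_assoc (Matrix.diagonal d) U (star U), hUU, Matrix.mul_one, hDD]
  have hPdet : IsUnit P.det := Matrix.isUnit_det_of_right_inverse hPQ
  have hPinv : P⁻¹ = Q := Matrix.inv_eq_right_inv hPQ
  have hM : M = P * Matrix.diagonal dvec * P⁻¹ := by
    rw [hPinv, hP, hQ, hMrec, hspec, Unitary.conjStarAlgAut_apply, ← hU]
    simp only [Matrix.mul_assoc]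
  constructor
  · exact ⟨P, dvec, hPdet, hM⟩
  · intro z hz
    have hcp : M.charpoly = ∏ i : Fin (n + 1), (X - C (dvec i)) := by
      rw [hM, charpoly_conj_aux _ _ hPdet]
      rw [Matrix.charpoly_of_upperTriangular _ (Matrix.blockTriangular_diagonal _)]
      simp
    rw [hcp] at hz
    rw [map_prod] at hz
    rcases Finset.prod_eq_zero_iff.mp hz with ⟨i, _, hi⟩
    simp only [map_sub, Polynomial.aeval_X, Polynomial.aeval_C] at hi
    have : z = (dvec i : ℂ) := by
      have := sub_eq_zero.mp hi
      simpa using this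
    rw [this]
    exact Complex.ofReal_im _
end

section
/- Let θ ∈ ℕ and x ∈ ℕ. Let C denote the set of functions A : {0,…,θ} → ℤ with A(0) = x and A(u+1) − A(u) ∈ {−1,0,1} for all 0 ≤ u ≤ θ−1, and let C₊ ⊆ C be the subset of nonnegative such functions. For A ∈ C define the discrete Skorokhod map Γ_A(u) := A(u) + max_{0 ≤ v ≤ u} max(−A(v), 0), and define H₀(A) := #{0 ≤ u ≤ θ−1 : A(u) = A(u+1) = 0}. Then for every A ∈ C₊, the number of functions Ã ∈ C with Γ_Ã = A is exactly 2^{H₀(A)}. -/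
/-- The discrete Skorokhod reflection map of a path `A : {0,…,θ} → ℤ`:
`Γ_A(u) = A(u) + max_{0 ≤ v ≤ u} max(−A(v), 0)`. -/
def skorokhodMap {θ : ℕ} (A : Fin (θ + 1) → ℤ) (u : Fin (θ + 1)) : ℤ :=
  A u + (Finset.Iic u).sup' Finset.nonempty_Iic (fun v => max (-(A v)) 0)

/-!
The running maximum in `Γ_B` is nonnegative, so `Γ_B` obeys Lindley's recursion
`Γ_B(0) = max(B(0), 0)`, `Γ_B(u+1) = max(Γ_B(u) + (B(u+1) − B(u)), 0)`.
Hence `Γ_B = A` constrains each increment of `B` separately, and since a path with a given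
start is determined by its increments, the preimage is a product of one set per step.
For `A ≥ 0` with unit steps, the increment `d ∈ {−1, 0, 1}` with `max(A(u) + d, 0) = A(u+1)`
is unique, namely `A(u+1) − A(u)`, except at a horizontal step at level `0`, where both
`d = −1` and `d = 0` qualify.
-/

open Finset

variable {θ : ℕ}

theorem Fin.Iic_succ_eq_insert (v : Fin θ) : Iic v.succ = insert v.succ (Iic v.castSucc) := by
  ext w
  simp only [mem_Iic, mem_insert, Fin.le_def, Fin.ext_iff, Fin.val_succ, Fin.val_castSucc]
  omega

theorem skorokhodMap_zero (B : Fin (θ + 1) → ℤ) : skorokhodMap B 0 = max (B 0) 0 := by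
  simp [skorokhodMap, ← bot_eq_zero]
  omega

theorem skorokhodMap_succ (B : Fin (θ + 1) → ℤ) (v : Fin θ) :
    skorokhodMap B v.succ = max (skorokhodMap B v.castSucc + (B v.succ - B v.castSucc)) 0 := by
  have hL : 0 ≤ (Iic v.castSucc).sup' nonempty_Iic fun w => max (-B w) 0 :=
    le_sup'_of_le _ (mem_Iic.2 le_rfl) (le_max_right _ _)
  have hsplit : (Iic v.succ).sup' nonempty_Iic (fun w => max (-B w) 0) =
      max (max (-B v.succ) 0) ((Iic v.castSucc).sup' nonempty_Iic fun w => max (-B w) 0) := by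
    rw [sup'_congr nonempty_Iic (Fin.Iic_succ_eq_insert v) fun _ _ => rfl, sup'_insert]
  rw [skorokhodMap, skorokhodMap, hsplit]
  omega

theorem skorokhodMap_eq_iff {A B : Fin (θ + 1) → ℤ} :
    (∀ u, skorokhodMap B u = A u) ↔
      A 0 = max (B 0) 0 ∧
        ∀ v : Fin θ, A v.succ = max (A v.castSucc + (B v.succ - B v.castSucc)) 0 := by
  constructor
  · intro h
    simp only [← h, skorokhodMap_zero, skorokhodMap_succ, implies_true, and_self]
  · rintro ⟨h0, hsucc⟩ u
    induction u using Fin.induction with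
    | zero => rw [skorokhodMap_zero, h0]
    | succ v ih => rw [skorokhodMap_succ, ih, hsucc]

theorem skorokhod_preimage_iff {A B : Fin (θ + 1) → ℤ} {x : ℤ} (hx : 0 ≤ x) (hA0 : A 0 = x) :
    ((B 0 = x ∧ ∀ u : Fin θ, B u.succ - B u.castSucc = -1 ∨
        B u.succ - B u.castSucc = 0 ∨ B u.succ - B u.castSucc = 1) ∧
      ∀ u, skorokhodMap B u = A u) ↔
      B 0 = x ∧ ∀ v : Fin θ, B v.succ - B v.castSucc ∈
        {d : ℤ | (d = -1 ∨ d = 0 ∨ d = 1) ∧ A v.succ = max (A v.castSucc + d) 0} := by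
  rw [skorokhodMap_eq_iff, hA0]
  constructor
  · rintro ⟨⟨hB0, hBstep⟩, -, hA⟩
    exact ⟨hB0, fun v => ⟨hBstep v, hA v⟩⟩
  · rintro ⟨hB0, hB⟩
    exact ⟨⟨hB0, fun v => (hB v).1⟩, by rw [hB0, max_eq_left hx], fun v => (hB v).2⟩

def Fin.pathEquivIncrements {G : Type*} [AddCommGroup G] {n : ℕ} (x : G) (S : Fin n → Set G) :
    {B : Fin (n + 1) → G // B 0 = x ∧ ∀ v, B v.succ - B v.castSucc ∈ S v} ≃ ∀ v, S v where
  toFun B v := ⟨B.1 v.succ - B.1 v.castSucc, B.2.2 v⟩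
  invFun d := ⟨fun u => x + Fin.partialSum (fun v => (d v).1) u, by simp,
    fun v => by simp [Fin.partialSum_succ]⟩
  left_inv := by
    rintro ⟨B, rfl, -⟩
    refine Subtype.ext (funext fun u => ?_)
    show B 0 + Fin.partialSum (fun v => B v.succ - B v.castSucc) u = B u
    induction u using Fin.induction with
    | zero => simp
    | succ v ih => rw [Fin.partialSum_succ, ← add_assoc, ih, add_sub_cancel]
  right_inv d := by
    ext v
    simp [Fin.partialSum_succ]

theorem card_reflected_unitStep {a b : ℤ} (ha : 0 ≤ a) (hb : 0 ≤ b)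
    (hab : b - a = -1 ∨ b - a = 0 ∨ b - a = 1) :
    Nat.card {d : ℤ | (d = -1 ∨ d = 0 ∨ d = 1) ∧ b = max (a + d) 0} =
      if a = 0 ∧ b = 0 then 2 else 1 := by
  split_ifs with h
  · have : {d : ℤ | (d = -1 ∨ d = 0 ∨ d = 1) ∧ b = max (a + d) 0} = {-1, 0} := by
      ext d
      simp only [Set.mem_ofPred_eq, Set.mem_insert_iff, Set.mem_singleton_iff]
      omega
    rw [this, Nat.card_coe_set_eq, Set.ncard_pair (by norm_num)]
  · have : {d : ℤ | (d = -1 ∨ d = 0 ∨ d = 1) ∧ b = max (a + d) 0} = {b - a} := by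
      ext d
      simp only [Set.mem_ofPred_eq, Set.mem_singleton_iff]
      omega
    rw [this, Nat.card_unique]

/-- For a nonnegative path `A` started at `x` with increments in
`{-1,0,1}`, the number of paths `B` started at `x` with increments in `{-1,0,1}` whose
Skorokhod reflection equals `A` is exactly `2 ^ H₀(A)`, where `H₀(A)` is the number of
horizontal steps of `A` at level `0`. -/
theorem card_skorokhod_preimage (θ x : ℕ) (A : Fin (θ + 1) → ℤ)
    (hA0 : A 0 = (x : ℤ))
    (hAstep : ∀ u : Fin θ, A u.succ - A u.castSucc = -1 ∨
      A u.succ - A u.castSucc = 0 ∨ A u.succ - A u.castSucc = 1)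
    (hApos : ∀ u, 0 ≤ A u) :
    Nat.card {B : Fin (θ + 1) → ℤ //
        (B 0 = (x : ℤ) ∧ ∀ u : Fin θ, B u.succ - B u.castSucc = -1 ∨
          B u.succ - B u.castSucc = 0 ∨ B u.succ - B u.castSucc = 1) ∧
        (∀ u, skorokhodMap B u = A u)} =
      2 ^ ((Finset.univ.filter
        (fun u : Fin θ => A u.castSucc = 0 ∧ A u.succ = 0)).card) := by
  rw [Nat.card_congr ((Equiv.subtypeEquivRight fun B =>
      skorokhod_preimage_iff (Int.natCast_nonneg x) hA0).trans (Fin.pathEquivIncrements _ _)),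
    Nat.card_pi, prod_congr rfl fun v _ => card_reflected_unitStep (hApos _) (hApos _) (hAstep v),
    prod_ite, prod_const, prod_const_one, mul_one]
end

section
/- For every t > 0 and every c > 0, there exists K < ∞ such that for every real m ≥ 1, setting θ := ⌊m² t⌋, the lazy random walk bridge of length θ from 0 to 0 satisfies E[ exp( c · R_θ / m ) ] ≤ K, where R_θ := max_{0 ≤ u ≤ θ} S(u) − min_{0 ≤ u ≤ θ} S(u) is the range of the path and E is the conditional expectation of the lazy random walk started at 0 given S(θ) = 0. -/
open scoped Classical

/-- The lazy random walk path of length `θ` started at `x`: increments are encoded by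
`ω : Fin θ → Fin 3`, where the value `i ∈ {0,1,2}` encodes the increment `i - 1 ∈ {-1,0,1}`.
`lazyPath θ x ω u` is the position after `u` steps (for `0 ≤ u ≤ θ`). -/
def lazyPath (θ : ℕ) (x : ℤ) (ω : Fin θ → Fin 3) (u : ℕ) : ℤ :=
  x + ∑ j : Fin θ, if (j : ℕ) < u then ((ω j : ℤ) - 1) else 0

/-- Vertex-occupation measure `Λ^a_θ = #{0 ≤ j ≤ θ : S(j) = a}`. -/
def vertexOcc (θ : ℕ) (x : ℤ) (ω : Fin θ → Fin 3) (a : ℤ) : ℕ :=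
  ((Finset.range (θ + 1)).filter (fun j => lazyPath θ x ω j = a)).card

/-- Edge-occupation measure `Λ^{(a,b)}_θ = #{0 ≤ u ≤ θ-1 : S(u) = a, S(u+1) = b}`. -/
def edgeOcc (θ : ℕ) (x : ℤ) (ω : Fin θ → Fin 3) (a b : ℤ) : ℕ :=
  ((Finset.range θ).filter
    (fun u => lazyPath θ x ω u = a ∧ lazyPath θ x ω (u + 1) = b)).card

/-- The range `R_θ = max_{0 ≤ u ≤ θ} S(u) − min_{0 ≤ u ≤ θ} S(u)` of the path. -/
def pathRange (θ : ℕ) (x : ℤ) (ω : Fin θ → Fin 3) : ℤ :=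
  ((Finset.range (θ + 1)).sup' Finset.nonempty_range_add_one (fun u => lazyPath θ x ω u))
    - ((Finset.range (θ + 1)).inf' Finset.nonempty_range_add_one (fun u => lazyPath θ x ω u))

/-!
A bridge of range at least `k` reaches `r = ⌈k/2⌉` or `-r`. Reflecting the increments after
its first visit to `r` maps the bridges reaching `r` injectively to walks ending at `2r`, and
negation handles `-r`. Grouping walks by their numbers of moving and down steps, the number of
walks ending at `2r` is a sum of terms `C(θ, 2n) C(2n, n - r)` with `2n ≤ θ`, each at most
`exp (-r² / 2n)` times the term `C(θ, 2n) C(2n, n)` of the number of bridges. Hence the range of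
the bridge has the Gaussian tail `2 exp (-k² / 4θ)`. Summing by parts,
`E exp (c R / m) ≤ 1 + ∑ₖ (c/m) exp (c (k+1)/m) · 2 exp (-(k+1)² / 4θ)`, and for `θ ≤ m² t`
the exponent is at most `(c+1)² t - (k+1)/m`, leaving a geometric series of total at most `m`.
-/

section

open Finset Real

theorem Finset.sum_comp_eq_card_smul_add_sum_card_smul {α M : Type*} [AddCommGroup M]
    (s : Finset α) (f : α → ℕ) (g : ℕ → M) {n : ℕ} (hf : ∀ a ∈ s, f a ≤ n) :
    ∑ a ∈ s, g (f a) =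
      #s • g 0 + ∑ k ∈ range n, #{a ∈ s | k < f a} • (g (k + 1) - g k) := by
  have htel : ∀ a ∈ s,
      g (f a) = g 0 + ∑ k ∈ range n, if k < f a then g (k + 1) - g k else 0 := by
    intro a ha
    have hrange : {k ∈ range n | k < f a} = range (f a) := by
      ext k
      simp only [mem_filter, mem_range]
      have := hf a ha
      omega
    rw [← sum_filter, hrange, sum_range_sub]
    abel
  rw [sum_congr rfl htel, sum_add_distrib, sum_const, sum_comm]
  congr 1
  refine sum_congr rfl fun k _ => ?_
  rw [← sum_filter, sum_const]

theorem Nat.choose_sub_le_exp_mul_centralBinom {n r : ℕ} (h : r ≤ n) :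
    ((2 * n).choose (n - r) : ℝ) ≤ exp (-(r : ℝ) ^ 2 / (2 * n)) * n.centralBinom := by
  induction r with
  | zero => simp [Nat.centralBinom_eq_two_mul_choose]
  | succ r ih =>
    have hn : (0 : ℝ) < n := by exact_mod_cast (show 0 < n by omega)
    have hstep : ((2 * n).choose (n - (r + 1)) : ℝ) * (n + r + 1) =
        (2 * n).choose (n - r) * (n - r) := by
      have := Nat.choose_succ_right_eq (2 * n) (n - (r + 1))
      rw [show n - (r + 1) + 1 = n - r by omega,
        show 2 * n - (n - (r + 1)) = n + r + 1 by omega] at this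
      rw [← Nat.cast_sub (by omega : r ≤ n)]
      exact_mod_cast this.symm
    have hratio : ((n : ℝ) - r) / (n + r + 1) ≤ exp (-(2 * r + 1) / (2 * n)) := by
      refine le_trans ?_ (add_one_le_exp _)
      rw [div_le_iff₀ (by positivity)]
      have : ((r : ℝ) + 1) ≤ n := by exact_mod_cast h
      field_simp
      nlinarith
    calc ((2 * n).choose (n - (r + 1)) : ℝ)
        = (2 * n).choose (n - r) * (((n : ℝ) - r) / (n + r + 1)) := by
          rw [mul_div_assoc', eq_div_iff (by positivity), hstep]
      _ ≤ exp (-(r : ℝ) ^ 2 / (2 * n)) * n.centralBinom * exp (-(2 * r + 1) / (2 * n)) := by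
          gcongr
          · have : ((r : ℝ) + 1) ≤ n := by exact_mod_cast h
            exact div_nonneg (by linarith) (by positivity)
          · exact ih (by omega)
      _ = exp (-((r + 1 : ℕ) : ℝ) ^ 2 / (2 * n)) * n.centralBinom := by
          rw [mul_right_comm, ← exp_add]
          congr 2
          push_cast
          ring

theorem Nat.choose_mul_choose_le_exp_mul (θ q r : ℕ) :
    (θ.choose (2 * (q + r)) * (2 * (q + r)).choose q : ℝ) ≤
      exp (-(r : ℝ) ^ 2 / θ) * (θ.choose (2 * (q + r)) * (q + r).centralBinom) := by
  rcases lt_or_ge θ (2 * (q + r)) with hθ | hθ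
  · simp [Nat.choose_eq_zero_of_lt hθ]
  rcases Nat.eq_zero_or_pos r with rfl | hr
  · simp [Nat.centralBinom_eq_two_mul_choose]
  have hratio := Nat.choose_sub_le_exp_mul_centralBinom (Nat.le_add_left r q)
  rw [Nat.add_sub_cancel] at hratio
  have hexp : exp (-(r : ℝ) ^ 2 / (2 * ↑(q + r))) ≤ exp (-(r : ℝ) ^ 2 / θ) := by
    rw [exp_le_exp, neg_div, neg_div, neg_le_neg_iff]
    exact div_le_div_of_nonneg_left (by positivity) (by positivity) (by exact_mod_cast hθ)
  calc (θ.choose (2 * (q + r)) : ℝ) * (2 * (q + r)).choose q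
      ≤ θ.choose (2 * (q + r)) * (exp (-(r : ℝ) ^ 2 / θ) * (q + r).centralBinom) := by
        gcongr
        exact hratio.trans (mul_le_mul_of_nonneg_right hexp (Nat.cast_nonneg _))
    _ = _ := by ring

lemma mul_div_sub_sq_div_le (c x : ℝ) {t m θ : ℝ} (ht : 0 < t) (hm : 0 < m) (hθ : 0 < θ)
    (hθt : θ ≤ m ^ 2 * t) : c * x / m - x ^ 2 / (4 * θ) ≤ (c + 1) ^ 2 * t - x / m := by
  have hθ' : x ^ 2 / (4 * (m ^ 2 * t)) ≤ x ^ 2 / (4 * θ) :=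
    div_le_div_of_nonneg_left (sq_nonneg x) (by positivity) (by linarith)
  have hsq : (c + 1) ^ 2 * t - x / m - (c * x / m - x ^ 2 / (4 * (m ^ 2 * t))) =
      (x / m - 2 * t * (c + 1)) ^ 2 / (4 * t) := by
    field_simp
    ring
  have : 0 ≤ (x / m - 2 * t * (c + 1)) ^ 2 / (4 * t) := by positivity
  linarith

lemma sum_range_exp_neg_succ_div_le {m : ℝ} (hm : 0 < m) (n : ℕ) :
    ∑ k ∈ range n, exp (-((k + 1) / m)) ≤ m := by
  set y := exp (-(1 / m))
  have hy : y < 1 := exp_lt_one_iff.2 (by simp [hm])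
  have hy_inv : y * exp (1 / m) = 1 := by rw [← exp_add, neg_add_cancel, exp_zero]
  have hym : y * (1 + m) ≤ m :=
    calc y * (1 + m) = y * m * (1 + 1 / m) := by field_simp; ring
      _ ≤ y * m * exp (1 / m) := by gcongr; linarith [add_one_le_exp (1 / m)]
      _ = m := by rw [mul_right_comm, hy_inv, one_mul]
  calc ∑ k ∈ range n, exp (-((k + 1) / m)) = y * ∑ k ∈ range n, y ^ k := by
        rw [mul_sum]
        refine sum_congr rfl fun k _ => ?_
        rw [← pow_succ', ← exp_nat_mul]
        congr 1
        push_cast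
        ring
    _ ≤ y * (y ^ 0 / (1 - y)) := by
        gcongr
        rw [range_eq_Ico]
        exact geom_sum_Ico_le_of_lt_one (exp_pos _).le hy
    _ ≤ m := by
        rw [pow_zero, mul_one_div, div_le_iff₀ (by linarith)]
        linarith

end

namespace LazyWalk

open Finset Real MeasureTheory

variable {θ : ℕ}

lemma lazyPath_zero (x : ℤ) (ω : Fin θ → Fin 3) : lazyPath θ x ω 0 = x := by
  simp [lazyPath]

lemma lazyPath_sub_lazyPath (x : ℤ) (ω : Fin θ → Fin 3) {a b : ℕ} (hab : a ≤ b) :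
    lazyPath θ x ω b - lazyPath θ x ω a =
      ∑ j : Fin θ, if a ≤ (j : ℕ) ∧ (j : ℕ) < b then ((ω j : ℤ) - 1) else 0 := by
  simp only [lazyPath, add_sub_add_left_eq_sub, ← sum_sub_distrib]
  refine sum_congr rfl fun j _ => ?_
  split_ifs <;> omega

lemma abs_lazyPath_sub_le (x : ℤ) (ω : Fin θ → Fin 3) {a b : ℕ} (hab : a ≤ b) :
    |lazyPath θ x ω b - lazyPath θ x ω a| ≤ b - a := by
  have hstep (j : Fin θ) :
      |if a ≤ (j : ℕ) ∧ (j : ℕ) < b then ((ω j : ℤ) - 1) else 0| ≤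
        if (j : ℕ) ∈ Ico a b then 1 else 0 := by
    have := (ω j).isLt
    split_ifs <;> simp_all [abs_le]
    omega
  calc |lazyPath θ x ω b - lazyPath θ x ω a|
      ≤ ∑ j : Fin θ, if (j : ℕ) ∈ Ico a b then (1 : ℤ) else 0 := by
        rw [lazyPath_sub_lazyPath x ω hab]
        exact (abs_sum_le_sum_abs _ _).trans (sum_le_sum fun j _ => hstep j)
    _ = #((range θ).filter (· ∈ Ico a b)) := by
        rw [Fin.sum_univ_eq_sum_range (fun j => if j ∈ Ico a b then (1 : ℤ) else 0), sum_boole]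
    _ ≤ #(Ico a b) := by exact_mod_cast card_le_card fun j hj => (mem_filter.1 hj).2
    _ = b - a := by simp [Nat.card_Ico, hab]

lemma abs_lazyPath_succ_sub_le (x : ℤ) (ω : Fin θ → Fin 3) (u : ℕ) :
    |lazyPath θ x ω (u + 1) - lazyPath θ x ω u| ≤ 1 := by
  simpa using abs_lazyPath_sub_le x ω (Nat.le_succ u)

lemma pathRange_nonneg (x : ℤ) (ω : Fin θ → Fin 3) : 0 ≤ pathRange θ x ω :=
  sub_nonneg.2 ((inf'_le _ (mem_range.2 θ.succ_pos)).trans (le_sup' _ (mem_range.2 θ.succ_pos)))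

lemma pathRange_le (x : ℤ) (ω : Fin θ → Fin 3) : pathRange θ x ω ≤ 2 * θ := by
  have hdev (u : ℕ) (hu : u ∈ range (θ + 1)) : |lazyPath θ x ω u - x| ≤ θ := by
    have := abs_lazyPath_sub_le x ω (Nat.zero_le u)
    rw [lazyPath_zero] at this
    have := mem_range.1 hu
    omega
  have hsup : (range (θ + 1)).sup' nonempty_range_add_one (lazyPath θ x ω ·) ≤ x + θ :=
    sup'_le _ _ fun u hu => by have := abs_le.1 (hdev u hu); omega
  have hinf : x - θ ≤ (range (θ + 1)).inf' nonempty_range_add_one (lazyPath θ x ω ·) :=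
    le_inf' _ _ fun u hu => by have := abs_le.1 (hdev u hu); omega
  unfold pathRange
  omega

def reflectFrom (τ : ℕ) (ω : Fin θ → Fin 3) : Fin θ → Fin 3 :=
  fun j => if τ ≤ (j : ℕ) then (ω j).rev else ω j

lemma reflectFrom_involutive (τ : ℕ) : Function.Involutive (reflectFrom (θ := θ) τ) := by
  intro ω
  funext j
  by_cases h : τ ≤ (j : ℕ) <;> simp [reflectFrom, h]

lemma lazyPath_reflectFrom_of_le (x : ℤ) (ω : Fin θ → Fin 3) {τ u : ℕ} (hu : u ≤ τ) :
    lazyPath θ x (reflectFrom τ ω) u = lazyPath θ x ω u := by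
  refine congrArg (x + ·) (sum_congr rfl fun j _ => ?_)
  by_cases h : (j : ℕ) < u
  · simp [reflectFrom, h, show ¬τ ≤ (j : ℕ) by omega]
  · simp [h]

lemma lazyPath_reflectFrom_of_ge (x : ℤ) (ω : Fin θ → Fin 3) {τ u : ℕ} (hu : τ ≤ u) :
    lazyPath θ x (reflectFrom τ ω) u = 2 * lazyPath θ x ω τ - lazyPath θ x ω u := by
  have hrev (i : Fin 3) : ((i.rev : Fin 3) : ℤ) - 1 = -((i : ℤ) - 1) := by
    have := i.isLt
    rw [Fin.val_rev]
    omega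
  have hflip : lazyPath θ x (reflectFrom τ ω) u - lazyPath θ x (reflectFrom τ ω) τ =
      -(lazyPath θ x ω u - lazyPath θ x ω τ) := by
    rw [lazyPath_sub_lazyPath x _ hu, lazyPath_sub_lazyPath x _ hu, ← sum_neg_distrib]
    refine sum_congr rfl fun j _ => ?_
    split_ifs with h
    · simp only [reflectFrom, if_pos h.1, hrev]
    · rfl
  have := lazyPath_reflectFrom_of_le x ω le_rfl (τ := τ)
  omega

noncomputable def hitTime (r : ℤ) (ω : Fin θ → Fin 3) : ℕ :=
  hittingBtwn (fun u ω => lazyPath θ 0 ω u) (Set.Ici r) 0 θ ω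

lemma hitTime_le (r : ℤ) (ω : Fin θ → Fin 3) : hitTime r ω ≤ θ := hittingBtwn_le ω

lemma le_lazyPath_hitTime {r : ℤ} {ω : Fin θ → Fin 3}
    (h : ∃ u ≤ θ, r ≤ lazyPath θ 0 ω u) :
    r ≤ lazyPath θ 0 ω (hitTime r ω) := by
  obtain ⟨u, hu, hr⟩ := h
  exact hittingBtwn_mem_set (u := fun u ω => lazyPath θ 0 ω u) (s := Set.Ici r)
    ⟨u, ⟨u.zero_le, hu⟩, hr⟩

lemma lazyPath_lt_of_lt_hitTime {r : ℤ} {ω : Fin θ → Fin 3} {u : ℕ}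
    (hu : u < hitTime r ω) :
    lazyPath θ 0 ω u < r :=
  not_le.1 (notMem_of_lt_hittingBtwn (u := fun u ω => lazyPath θ 0 ω u) hu u.zero_le)

/-- Unit steps make the walk from `0` hit a level `r ≥ 0` exactly. -/
lemma lazyPath_hitTime (r : ℕ) {ω : Fin θ → Fin 3}
    (h : ∃ u ≤ θ, (r : ℤ) ≤ lazyPath θ 0 ω u) :
    lazyPath θ 0 ω (hitTime r ω) = r := by
  have hge := le_lazyPath_hitTime h
  rcases Nat.eq_zero_or_pos (hitTime r ω) with h0 | hpos
  · rw [h0, lazyPath_zero] at hge ⊢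
    omega
  · obtain ⟨v, hv⟩ := Nat.exists_eq_add_one.2 hpos
    have hlt := lazyPath_lt_of_lt_hitTime (r := r) (ω := ω) (u := v) (by omega)
    have := abs_le.1 (abs_lazyPath_succ_sub_le 0 ω v)
    rw [hv] at hge ⊢
    omega

lemma hitTime_eq_of_eqOn {r : ℤ} {ω ω' : Fin θ → Fin 3}
    (h : ∃ u ≤ θ, r ≤ lazyPath θ 0 ω u)
    (heq : ∀ u ≤ hitTime r ω, lazyPath θ 0 ω' u = lazyPath θ 0 ω u) :
    hitTime r ω' = hitTime r ω := by
  have hτ := le_lazyPath_hitTime h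
  have hle : hitTime r ω' ≤ hitTime r ω :=
    hittingBtwn_le_of_mem (u := fun u ω => lazyPath θ 0 ω u) (s := Set.Ici r) (Nat.zero_le _)
      (hitTime_le r ω) (by rw [Set.mem_Ici, heq _ le_rfl]; exact hτ)
  refine hle.antisymm (not_lt.1 fun hlt => ?_)
  have h' : r ≤ lazyPath θ 0 ω' (hitTime r ω') :=
    le_lazyPath_hitTime ⟨_, hitTime_le r ω, (heq _ le_rfl).symm ▸ hτ⟩
  rw [heq _ hle] at h'
  exact (lazyPath_lt_of_lt_hitTime hlt).not_ge h'

def walksEndingAt (θ : ℕ) (z : ℤ) : Finset (Fin θ → Fin 3) :=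
  {ω | lazyPath θ 0 ω θ = z}

/-- Reflection principle: reflect the increments after the first time the bridge reaches `r`. -/
theorem card_bridges_reaching_le (r : ℕ) :
    #{ω ∈ walksEndingAt θ 0 | ∃ u ≤ θ, (r : ℤ) ≤ lazyPath θ 0 ω u} ≤
      #(walksEndingAt θ (2 * r)) := by
  set Φ : (Fin θ → Fin 3) → (Fin θ → Fin 3) := fun ω => reflectFrom (hitTime r ω) ω
  refine card_le_card_of_injOn Φ (fun ω hω => ?_)
    (Set.LeftInvOn.injOn (f₁' := Φ) fun ω hω => ?_)
  swap
  · have hτ : hitTime r (Φ ω) = hitTime r ω :=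
      hitTime_eq_of_eqOn (mem_filter.1 hω).2 fun u hu => lazyPath_reflectFrom_of_le 0 ω hu
    simp only [Φ, hτ]
    exact reflectFrom_involutive _ ω
  simp only [walksEndingAt, coe_filter, mem_filter, mem_univ, true_and,
    Set.mem_ofPred_eq] at hω ⊢
  rw [lazyPath_reflectFrom_of_ge 0 ω (hitTime_le _ ω), lazyPath_hitTime r hω.2, hω.1, sub_zero]

theorem card_bridges_reaching_neg_le (r : ℕ) :
    #{ω ∈ walksEndingAt θ 0 | ∃ u ≤ θ, lazyPath θ 0 ω u ≤ -r} ≤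
      #{ω ∈ walksEndingAt θ 0 | ∃ u ≤ θ, (r : ℤ) ≤ lazyPath θ 0 ω u} := by
  have hneg (ω : Fin θ → Fin 3) (u : ℕ) :
      lazyPath θ 0 (reflectFrom 0 ω) u = -lazyPath θ 0 ω u := by
    rw [lazyPath_reflectFrom_of_ge 0 ω u.zero_le, lazyPath_zero]
    ring
  refine card_le_card_of_injOn (reflectFrom 0) (fun ω hω => ?_)
    (reflectFrom_involutive 0).injective.injOn
  simp only [walksEndingAt, coe_filter, mem_filter, mem_univ, true_and, Set.mem_ofPred_eq,
    hneg] at hω ⊢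
  obtain ⟨hend, u, hu, hr⟩ := hω
  exact ⟨by rw [hend, neg_zero], u, hu, by omega⟩

def movingSteps (ω : Fin θ → Fin 3) : Finset (Fin θ) := {j | ω j ≠ 1}

def downSteps (ω : Fin θ → Fin 3) : Finset (Fin θ) := {j | ω j = 0}

lemma lazyPath_self (ω : Fin θ → Fin 3) :
    lazyPath θ 0 ω θ = #(movingSteps ω) - 2 * #(downSteps ω) := by
  have hstep (j : Fin θ) : (if (j : ℕ) < θ then ((ω j : ℤ) - 1) else 0) =
      (if ω j ≠ 1 then 1 else 0) - 2 * (if ω j = 0 then 1 else 0) := by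
    rw [if_pos j.isLt]
    generalize ω j = i
    fin_cases i <;> simp
  simp only [lazyPath, zero_add, hstep, sum_sub_distrib, ← mul_sum, sum_boole, movingSteps,
    downSteps]

def ofSteps (A B : Finset (Fin θ)) : Fin θ → Fin 3 :=
  fun j => if j ∈ B then 0 else if j ∈ A then 2 else 1

lemma movingSteps_ofSteps {A B : Finset (Fin θ)} (h : B ⊆ A) :
    movingSteps (ofSteps A B) = A := by
  ext j
  rw [movingSteps, mem_filter_univ, ofSteps]
  by_cases hB : j ∈ B
  · simp [hB, h hB]
  · by_cases hA : j ∈ A <;> simp [hA, hB]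

lemma downSteps_ofSteps (A B : Finset (Fin θ)) : downSteps (ofSteps A B) = B := by
  ext j
  rw [downSteps, mem_filter_univ, ofSteps]
  by_cases hB : j ∈ B <;> by_cases hA : j ∈ A <;> simp [hA, hB]

lemma ofSteps_movingSteps_downSteps (ω : Fin θ → Fin 3) :
    ofSteps (movingSteps ω) (downSteps ω) = ω := by
  funext j
  simp only [ofSteps, movingSteps, downSteps, mem_filter_univ]
  generalize ω j = i
  fin_cases i <;> simp

lemma downSteps_subset_movingSteps (ω : Fin θ → Fin 3) : downSteps ω ⊆ movingSteps ω := by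
  intro j
  simp +contextual [downSteps, movingSteps]

theorem card_movingSteps_downSteps (n q : ℕ) :
    #{ω : Fin θ → Fin 3 | #(movingSteps ω) = n ∧ #(downSteps ω) = q} =
      θ.choose n * n.choose q := by
  have hpairs : #((univ.powersetCard n).sigma fun A : Finset (Fin θ) => A.powersetCard q) =
      θ.choose n * n.choose q := by
    rw [card_sigma,
      sum_congr rfl fun A hA => by rw [card_powersetCard, (mem_powersetCard_univ.1 hA)],
      sum_const, card_powersetCard, card_univ, Fintype.card_fin, smul_eq_mul]
  rw [← hpairs]
  refine card_nbij' (fun ω => ⟨movingSteps ω, downSteps ω⟩) (fun p => ofSteps p.1 p.2)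
    (fun ω hω => ?_) (fun p hp => ?_) (fun ω _ => ofSteps_movingSteps_downSteps ω)
    (fun p hp => ?_)
  · simp only [coe_filter, mem_univ, true_and, Set.mem_ofPred_eq] at hω
    simp [mem_powersetCard, hω, downSteps_subset_movingSteps]
  · simp only [coe_sigma, Set.mem_sigma_iff, mem_coe, mem_powersetCard] at hp
    simp [movingSteps_ofSteps hp.2.1, downSteps_ofSteps, hp.1, hp.2.2]
  · simp only [coe_sigma, Set.mem_sigma_iff, mem_coe, mem_powersetCard] at hp
    simp [movingSteps_ofSteps hp.2.1, downSteps_ofSteps]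

theorem card_walksEndingAt_two_mul (r : ℕ) :
    #(walksEndingAt θ (2 * r)) =
      ∑ q ∈ range (θ + 1), θ.choose (2 * (q + r)) * (2 * (q + r)).choose q := by
  have hdown (ω : Fin θ → Fin 3) : #(downSteps ω) ∈ range (θ + 1) :=
    mem_range.2 (Nat.lt_succ_of_le ((card_le_univ _).trans_eq (Fintype.card_fin θ)))
  rw [card_eq_sum_card_fiberwise fun ω _ => hdown ω]
  refine sum_congr rfl fun q _ => ?_
  rw [← card_movingSteps_downSteps, walksEndingAt, filter_filter]
  congr 1
  refine filter_congr fun ω _ => ?_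
  rw [lazyPath_self]
  omega

theorem card_walksEndingAt_two_mul_le (r : ℕ) :
    (#(walksEndingAt θ (2 * r)) : ℝ) ≤ exp (-(r : ℝ) ^ 2 / θ) * #(walksEndingAt θ 0) := by
  set T : ℕ → ℕ := fun n => θ.choose (2 * n) * n.centralBinom
  have hshift : ∑ q ∈ range (θ + 1), T (q + r) ≤ ∑ q ∈ range (θ + 1), T q := by
    have hmap : ∑ q ∈ range (θ + 1), T (q + r) =
        ∑ q ∈ (range (θ + 1)).map (addRightEmbedding r), T q := by
      rw [sum_map]
      rfl
    rw [hmap]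
    refine sum_le_sum_of_ne_zero fun q _ hq => mem_range.2 ?_
    by_contra! hqθ
    exact hq (by simp [T, Nat.choose_eq_zero_of_lt (by omega : θ < 2 * q)])
  have hzero := card_walksEndingAt_two_mul (θ := θ) 0
  simp only [Nat.cast_zero, mul_zero, add_zero] at hzero
  calc (#(walksEndingAt θ (2 * r)) : ℝ)
      ≤ ∑ q ∈ range (θ + 1), exp (-(r : ℝ) ^ 2 / θ) * T (q + r) := by
        rw [card_walksEndingAt_two_mul r]
        push_cast
        exact sum_le_sum fun q _ => by
          simpa [T] using Nat.choose_mul_choose_le_exp_mul θ q r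
    _ ≤ exp (-(r : ℝ) ^ 2 / θ) * #(walksEndingAt θ 0) := by
        rw [← mul_sum, hzero]
        refine mul_le_mul_of_nonneg_left ?_ (exp_pos _).le
        exact_mod_cast hshift.trans_eq (by simp [T, Nat.centralBinom_eq_two_mul_choose])

lemma exists_le_or_exists_le_of_le_pathRange (x : ℤ) (ω : Fin θ → Fin 3) {r : ℤ}
    (h : 2 * r - 1 ≤ pathRange θ x ω) :
    (∃ u ≤ θ, r ≤ lazyPath θ x ω u) ∨ ∃ u ≤ θ, lazyPath θ x ω u ≤ -r := by
  by_contra! hfar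
  have hsup : (range (θ + 1)).sup' nonempty_range_add_one (lazyPath θ x ω ·) ≤ r - 1 :=
    sup'_le _ _ fun u hu => by have := hfar.1 u (Nat.lt_succ_iff.1 (mem_range.1 hu)); omega
  have hinf : 1 - r ≤ (range (θ + 1)).inf' nonempty_range_add_one (lazyPath θ x ω ·) :=
    le_inf' _ _ fun u hu => by have := hfar.2 u (Nat.lt_succ_iff.1 (mem_range.1 hu)); omega
  unfold pathRange at h
  omega

theorem card_bridges_le_pathRange_le (k : ℕ) :
    (#{ω ∈ walksEndingAt θ 0 | (k : ℤ) ≤ pathRange θ 0 ω} : ℝ) ≤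
      2 * exp (-(k : ℝ) ^ 2 / (4 * θ)) * #(walksEndingAt θ 0) := by
  set r := (k + 1) / 2
  have hsub : {ω ∈ walksEndingAt θ 0 | (k : ℤ) ≤ pathRange θ 0 ω} ⊆
      {ω ∈ walksEndingAt θ 0 | ∃ u ≤ θ, (r : ℤ) ≤ lazyPath θ 0 ω u} ∪
        {ω ∈ walksEndingAt θ 0 | ∃ u ≤ θ, lazyPath θ 0 ω u ≤ -r} := by
    intro ω hω
    rw [mem_filter] at hω
    rw [← filter_or, mem_filter]
    exact ⟨hω.1, exists_le_or_exists_le_of_le_pathRange 0 ω (by omega)⟩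
  have hexp : exp (-(r : ℝ) ^ 2 / θ) ≤ exp (-(k : ℝ) ^ 2 / (4 * θ)) := by
    have hkr : (k : ℝ) ≤ 2 * r := by exact_mod_cast (show k ≤ 2 * r by omega)
    rw [exp_le_exp, neg_div, neg_div, neg_le_neg_iff,
      show (k : ℝ) ^ 2 / (4 * θ) = k ^ 2 / 4 / θ by ring]
    exact div_le_div_of_nonneg_right (by nlinarith) (Nat.cast_nonneg θ)
  calc (#{ω ∈ walksEndingAt θ 0 | (k : ℤ) ≤ pathRange θ 0 ω} : ℝ)
      ≤ 2 * #{ω ∈ walksEndingAt θ 0 | ∃ u ≤ θ, (r : ℤ) ≤ lazyPath θ 0 ω u} := by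
        have := (card_le_card hsub).trans (card_union_le _ _)
        have := card_bridges_reaching_neg_le (θ := θ) r
        norm_cast
        omega
    _ ≤ 2 * (exp (-(r : ℝ) ^ 2 / θ) * #(walksEndingAt θ 0)) := by
        gcongr
        exact (Nat.cast_le.2 (card_bridges_reaching_le r)).trans
          (by exact_mod_cast card_walksEndingAt_two_mul_le r)
    _ ≤ 2 * exp (-(k : ℝ) ^ 2 / (4 * θ)) * #(walksEndingAt θ 0) := by
        rw [← mul_assoc]
        gcongr

lemma card_lt_toNat_pathRange_smul_le {t c m : ℝ} (ht : 0 < t) (hc : 0 ≤ c) (hm : 0 < m)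
    (hθ : (θ : ℝ) ≤ m ^ 2 * t) {k : ℕ} (hk : k < 2 * θ) :
    #{ω ∈ walksEndingAt θ 0 | k < (pathRange θ 0 ω).toNat} •
        (exp (c * (k + 1 : ℕ) / m) - exp (c * k / m)) ≤
      2 * c / m * exp ((c + 1) ^ 2 * t) * #(walksEndingAt θ 0) * exp (-((k + 1) / m)) := by
  have hθpos : (0 : ℝ) < θ := by exact_mod_cast (show 0 < θ by omega)
  have hcard : (#{ω ∈ walksEndingAt θ 0 | k < (pathRange θ 0 ω).toNat} : ℝ) ≤
      2 * exp (-((k + 1 : ℕ) : ℝ) ^ 2 / (4 * θ)) * #(walksEndingAt θ 0) := by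
    convert card_bridges_le_pathRange_le (θ := θ) (k + 1) using 5 with ω
    omega
  have hinc : exp (c * (k + 1 : ℕ) / m) - exp (c * k / m) ≤
      c / m * exp (c * (k + 1 : ℕ) / m) := by
    have : exp (c * k / m) = exp (c * (k + 1 : ℕ) / m) * exp (-(c / m)) := by
      rw [← exp_add]; push_cast; ring_nf
    rw [this]
    nlinarith [add_one_le_exp (-(c / m)), exp_pos (c * (k + 1 : ℕ) / m)]
  have hexp : exp (c * (k + 1 : ℕ) / m) * exp (-((k + 1 : ℕ) : ℝ) ^ 2 / (4 * θ)) ≤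
      exp ((c + 1) ^ 2 * t) * exp (-((k + 1) / m)) := by
    rw [← exp_add, ← exp_add, exp_le_exp, neg_div]
    have := mul_div_sub_sq_div_le c (k + 1 : ℕ) ht hm hθpos hθ
    push_cast at this ⊢
    linarith
  rw [nsmul_eq_mul]
  calc _ ≤ 2 * exp (-((k + 1 : ℕ) : ℝ) ^ 2 / (4 * θ)) * #(walksEndingAt θ 0) *
          (c / m * exp (c * (k + 1 : ℕ) / m)) := by
        refine mul_le_mul hcard hinc (sub_nonneg.2 (exp_le_exp.2 ?_)) (by positivity)
        gcongr
        exact_mod_cast k.le_succ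
    _ = 2 * c / m * #(walksEndingAt θ 0) *
          (exp (c * (k + 1 : ℕ) / m) * exp (-((k + 1 : ℕ) : ℝ) ^ 2 / (4 * θ))) := by ring
    _ ≤ 2 * c / m * #(walksEndingAt θ 0) * (exp ((c + 1) ^ 2 * t) * exp (-((k + 1) / m))) := by
        gcongr
    _ = _ := by ring

theorem sum_exp_pathRange_le {t c m : ℝ} (ht : 0 < t) (hc : 0 ≤ c) (hm : 0 < m)
    (hθ : (θ : ℝ) ≤ m ^ 2 * t) :
    ∑ ω ∈ walksEndingAt θ 0, exp (c * (pathRange θ 0 ω : ℝ) / m) ≤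
      (1 + 2 * c * exp ((c + 1) ^ 2 * t)) * #(walksEndingAt θ 0) := by
  have hcomp (ω : Fin θ → Fin 3) : exp (c * (pathRange θ 0 ω : ℝ) / m) =
      exp (c * ((pathRange θ 0 ω).toNat : ℕ) / m) := by
    rw [show (((pathRange θ 0 ω).toNat : ℕ) : ℝ) = (pathRange θ 0 ω : ℝ) by
      exact_mod_cast Int.toNat_of_nonneg (pathRange_nonneg 0 ω)]
  rw [sum_congr rfl fun ω _ => hcomp ω, sum_comp_eq_card_smul_add_sum_card_smul _ _
    (fun k : ℕ => exp (c * k / m)) fun ω _ => (show (pathRange θ 0 ω).toNat ≤ 2 * θ by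
      have := pathRange_le 0 ω; omega)]
  calc _ ≤ #(walksEndingAt θ 0) • exp (c * (0 : ℕ) / m) + ∑ k ∈ range (2 * θ),
          2 * c / m * exp ((c + 1) ^ 2 * t) * #(walksEndingAt θ 0) * exp (-((k + 1) / m)) :=
        add_le_add le_rfl (sum_le_sum fun k hk =>
          card_lt_toNat_pathRange_smul_le ht hc hm hθ (mem_range.1 hk))
    _ ≤ #(walksEndingAt θ 0) +
          2 * c / m * exp ((c + 1) ^ 2 * t) * #(walksEndingAt θ 0) * m := by
        rw [← mul_sum, nsmul_eq_mul]
        simp only [Nat.cast_zero, mul_zero, zero_div, exp_zero, mul_one]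
        gcongr
        exact sum_range_exp_neg_succ_div_le hm _
    _ = _ := by field_simp

end LazyWalk

/-- Uniform (in `m ≥ 1`) exponential moment bound for `c·R_θ/m`, where
`R_θ` is the range of the lazy random walk bridge of length `θ = ⌊m²t⌋` from `0` to `0`:
the expectation is the average of the integrand over all increment sequences whose
path ends at `0`. -/
theorem range_uniform_exponential_moments_bridge :
    ∀ t : ℝ, 0 < t → ∀ c : ℝ, 0 < c →
      ∃ K : ℝ, ∀ m : ℝ, 1 ≤ m →
        (∑ ω ∈ Finset.univ.filter
              (fun ω : Fin ⌊m ^ 2 * t⌋₊ → Fin 3 =>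
                lazyPath ⌊m ^ 2 * t⌋₊ 0 ω ⌊m ^ 2 * t⌋₊ = 0),
            Real.exp (c * (pathRange ⌊m ^ 2 * t⌋₊ 0 ω : ℝ) / m))
          / ((Finset.univ.filter
              (fun ω : Fin ⌊m ^ 2 * t⌋₊ → Fin 3 =>
                lazyPath ⌊m ^ 2 * t⌋₊ 0 ω ⌊m ^ 2 * t⌋₊ = 0)).card : ℝ) ≤ K := by
  intro t ht c hc
  refine ⟨1 + 2 * c * Real.exp ((c + 1) ^ 2 * t), fun m hm => ?_⟩
  have hbridge :
      (fun _ => 1 : Fin ⌊m ^ 2 * t⌋₊ → Fin 3) ∈ LazyWalk.walksEndingAt ⌊m ^ 2 * t⌋₊ 0 := by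
    simp [LazyWalk.walksEndingAt, lazyPath]
  rw [div_le_iff₀ (Nat.cast_pos.2 (Finset.card_pos.2 ⟨_, hbridge⟩))]
  exact LazyWalk.sum_exp_pathRange_le ht hc.le (by linarith) (Nat.floor_le (by positivity))
end

section
/- For every t > 0, every c > 0, and every real r with 0 < r < 2, there exists K < ∞ such that for every real m ≥ 1, setting θ := ⌊m² t⌋, the lazy random walk of length θ started at 0 satisfies E[ exp( c · (R_θ / m)^r ) ] ≤ K, where R_θ := max_{0 ≤ u ≤ θ} S(u) − min_{0 ≤ u ≤ θ} S(u) is the range of the path. -/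
open scoped Classical

/-! The increments of the walk are independent, centred and bounded, so every block sum
`∑_{j ∈ T} ω_j` has the sub-Gaussian tail `2 exp(-b² / 2θ)` (Chernoff's bound together with
`cosh l ≤ exp (l² / 2)`). Etemadi's maximal inequality transfers this tail to `max_u |S(u)|`, and
`R_θ ≤ 2 max_u |S(u)|`; with `θ ≤ m² t` this gives `P(R_θ ≥ j m) ≤ 4 exp(-j² / 72t)` uniformly
in `m`. Because `r < 2`, `c (j + 1)^r - j² / 72t ≤ C - j`, so summing over the layers
`j ≤ R_θ / m < j + 1` bounds the expectation by `4 e^C ∑_j e^{-j}`. -/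

open Finset Real

theorem card_filter_and_mul_card_eq {ι α : Type*} [Fintype ι] [DecidableEq ι] [Fintype α]
    (S : Finset ι) {P Q : (ι → α) → Prop}
    (hP : ∀ ω ω', (∀ i ∈ S, ω i = ω' i) → P ω → P ω')
    (hQ : ∀ ω ω', (∀ i ∉ S, ω i = ω' i) → Q ω → Q ω') :
    #{ω | P ω ∧ Q ω} * Fintype.card (ι → α) = #{ω | P ω} * #{ω | Q ω} := by
  have swap_swap (a b : ι → α) : S.piecewise (S.piecewise a b) (S.piecewise b a) = a := by
    ext i; by_cases hi : i ∈ S <;> simp [hi]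
  rw [← card_univ, ← card_product, ← card_product]
  refine card_bij' (fun p _ => (S.piecewise p.1 p.2, S.piecewise p.2 p.1))
    (fun p _ => (S.piecewise p.1 p.2, S.piecewise p.2 p.1)) ?_ ?_
    (fun p _ => by simp only [swap_swap]) (fun p _ => by simp only [swap_swap])
  · rintro ⟨a, b⟩ hab
    simp only [mem_product, mem_filter, mem_univ, true_and, and_true] at hab ⊢
    exact ⟨hP a _ (fun i hi => by simp [hi]) hab.1, hQ a _ (fun i hi => by simp [hi]) hab.2⟩
  · rintro ⟨a, b⟩ hab
    simp only [mem_product, mem_filter, mem_univ, true_and, and_true] at hab ⊢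
    exact ⟨hP a _ (fun i hi => by simp [hi]) hab.1, hQ b _ (fun i hi => by simp [hi]) hab.2⟩

theorem card_le_exp_mul_sum_exp {Ω : Type*} [Fintype Ω] (Y : Ω → ℝ) {l : ℝ} (hl : 0 ≤ l) (b : ℝ) :
    (#{ω | b ≤ Y ω} : ℝ) ≤ exp (-(l * b)) * ∑ ω, exp (l * Y ω) := by
  rw [mul_sum, card_eq_sum_ones, Nat.cast_sum, sum_filter]
  refine sum_le_sum fun ω _ => ?_
  split_ifs with h
  · rw [← exp_add, Nat.cast_one, ← exp_zero]
    exact exp_le_exp.2 (by nlinarith)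
  · positivity

section FirstPassage

variable {β : Type*} [Fintype β]

noncomputable def firstPassage (p : ℕ → β → Prop) (u : ℕ) : Finset β :=
  {x | p u x ∧ ∀ v < u, ¬ p v x}

theorem pairwiseDisjoint_firstPassage (p : ℕ → β → Prop) (s : Set ℕ) :
    s.PairwiseDisjoint (firstPassage p) := by
  have key {u v : ℕ} (huv : u < v) : Disjoint (firstPassage p u) (firstPassage p v) := by
    simp only [firstPassage, disjoint_filter]
    exact fun x _ hu hv => hv.2 u huv hu.1
  intro u _ v _ huv
  rcases huv.lt_or_gt with h | h
  exacts [key h, (key h).symm]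

theorem filter_exists_le_subset_biUnion_firstPassage [DecidableEq β] (p : ℕ → β → Prop) (n : ℕ) :
    ({x | ∃ u ≤ n, p u x} : Finset β) ⊆ (range (n + 1)).biUnion (firstPassage p) := by
  intro x hx
  simp only [mem_filter, mem_univ, true_and] at hx
  obtain ⟨u, hun, hu⟩ := hx
  have hex : ∃ v, p v x := ⟨u, hu⟩
  simp only [mem_biUnion, mem_range, firstPassage, mem_filter, mem_univ, true_and]
  exact ⟨Nat.find hex, by have := Nat.find_min' hex hu; omega, Nat.find_spec hex,
    fun v hv => Nat.find_min hex hv⟩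

end FirstPassage

theorem sum_card_inter_le_card {β ι : Type*} [DecidableEq β] {s : Finset ι} {A : ι → Finset β}
    (hA : (s : Set ι).PairwiseDisjoint A) (X : Finset β) : ∑ u ∈ s, #(A u ∩ X) ≤ #X := by
  rw [← card_biUnion (hA.mono fun u => inter_subset_left)]
  exact card_le_card (biUnion_subset.2 fun u _ => inter_subset_right)

theorem sum_card_inter_le_of_card_inter_mul_eq {β ι : Type*} [Fintype β] [Nonempty β]
    [DecidableEq β] {s : Finset ι} {A D : ι → Finset β} {M : ℝ} (hM : 0 ≤ M)
    (hA : (s : Set ι).PairwiseDisjoint A)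
    (hAD : ∀ u ∈ s, #(A u ∩ D u) * Fintype.card β = #(A u) * #(D u))
    (hD : ∀ u ∈ s, (#(D u) : ℝ) ≤ M) :
    ∑ u ∈ s, (#(A u ∩ D u) : ℝ) ≤ M := by
  have hN : (0 : ℝ) < Fintype.card β := by exact_mod_cast Fintype.card_pos
  have hsumA : ∑ u ∈ s, (#(A u) : ℝ) ≤ Fintype.card β := by
    exact_mod_cast (card_biUnion hA).symm.trans_le (card_le_univ _)
  refine le_of_mul_le_mul_right ?_ hN
  calc (∑ u ∈ s, (#(A u ∩ D u) : ℝ)) * Fintype.card β = ∑ u ∈ s, (#(A u) : ℝ) * #(D u) := by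
        rw [sum_mul]
        exact sum_congr rfl fun u hu => by exact_mod_cast hAD u hu
    _ ≤ ∑ u ∈ s, (#(A u) : ℝ) * M := by gcongr with u hu; exact hD u hu
    _ ≤ M * Fintype.card β := by rw [← sum_mul, mul_comm]; gcongr

section PartialSum

variable {α : Type*} {n : ℕ}

noncomputable def partialSum (f : α → ℝ) (ω : Fin n → α) (u : ℕ) : ℝ :=
  ∑ j ∈ univ.filter (fun j : Fin n => (j : ℕ) < u), f (ω j)

theorem partialSum_congr (f : α → ℝ) {u v : ℕ} (hvu : v ≤ u) {ω ω' : Fin n → α}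
    (h : ∀ j ∈ univ.filter (fun j : Fin n => (j : ℕ) < u), ω j = ω' j) :
    partialSum f ω v = partialSum f ω' v := by
  refine sum_congr rfl fun j hj => ?_
  simp only [mem_filter, mem_univ, true_and] at h hj
  rw [h j (by omega)]

theorem partialSum_length_sub (f : α → ℝ) (ω : Fin n → α) (u : ℕ) :
    partialSum f ω n - partialSum f ω u
      = ∑ j ∈ univ.filter (fun j : Fin n => ¬ (j : ℕ) < u), f (ω j) := by
  have hn : partialSum f ω n = ∑ j, f (ω j) := by
    rw [partialSum, filter_true_of_mem fun j _ => j.isLt]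
  rw [hn, partialSum, ← sum_filter_add_sum_filter_not univ (fun j : Fin n => (j : ℕ) < u)]
  ring

theorem card_firstPassage_inter_mul_card_eq [Fintype α] (f : α → ℝ) (q Q : ℝ → Prop) (u : ℕ) :
    #(firstPassage (fun v (ω : Fin n → α) => q (partialSum f ω v)) u
        ∩ ({ω | Q (partialSum f ω n - partialSum f ω u)} : Finset (Fin n → α)))
        * Fintype.card (Fin n → α)
      = #(firstPassage (fun v (ω : Fin n → α) => q (partialSum f ω v)) u)
        * #{ω : Fin n → α | Q (partialSum f ω n - partialSum f ω u)} := by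
  set A := firstPassage (fun v (ω : Fin n → α) => q (partialSum f ω v)) u
  set D : Finset (Fin n → α) := {ω | Q (partialSum f ω n - partialSum f ω u)}
  have hA (ω ω' : Fin n → α) (h : ∀ j ∈ univ.filter (fun j : Fin n => (j : ℕ) < u), ω j = ω' j)
      (hω : ω ∈ A) : ω' ∈ A := by
    simp only [A, firstPassage, mem_filter, mem_univ, true_and] at hω ⊢
    rw [← partialSum_congr f le_rfl h]
    exact ⟨hω.1, fun v hv => by rw [← partialSum_congr f hv.le h]; exact hω.2 v hv⟩
  have hD (ω ω' : Fin n → α) (h : ∀ j ∉ univ.filter (fun j : Fin n => (j : ℕ) < u), ω j = ω' j)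
      (hω : ω ∈ D) : ω' ∈ D := by
    simp only [D, mem_filter, mem_univ, true_and, partialSum_length_sub] at hω ⊢
    rwa [← sum_congr rfl fun j hj => congrArg f (h j (by simpa using hj))]
  have := card_filter_and_mul_card_eq _ hA hD
  simpa only [filter_and, filter_mem_eq_inter, univ_inter] using this

/-- Etemadi's maximal inequality, in counting form. -/
theorem card_exists_le_abs_partialSum_le [Fintype α] [Nonempty α] (f : α → ℝ) (b M : ℝ)
    (hM : ∀ u ≤ n, (#{ω : Fin n → α | 2 * b ≤ |partialSum f ω n - partialSum f ω u|} : ℝ) ≤ M) :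
    (#{ω : Fin n → α | ∃ u ≤ n, 3 * b ≤ |partialSum f ω u|} : ℝ)
      ≤ #{ω : Fin n → α | b ≤ |partialSum f ω n|} + M := by
  set p := fun u (ω : Fin n → α) => 3 * b ≤ |partialSum f ω u|
  set A := firstPassage p
  set B : Finset (Fin n → α) := {ω | b ≤ |partialSum f ω n|}
  set D : ℕ → Finset (Fin n → α) := fun u => {ω | 2 * b ≤ |partialSum f ω n - partialSum f ω u|}
  have hdisj := pairwiseDisjoint_firstPassage p (range (n + 1))
  have hsplit (u : ℕ) : A u ⊆ (A u ∩ B) ∪ (A u ∩ D u) := by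
    intro ω hω
    simp only [A, B, D, p, firstPassage, mem_union, mem_inter, mem_filter, mem_univ, true_and]
      at hω ⊢
    refine (le_or_gt b |partialSum f ω n|).imp (fun h => ⟨hω, h⟩) fun h => ⟨hω, ?_⟩
    have := abs_sub_abs_le_abs_sub (partialSum f ω u) (partialSum f ω n)
    rw [abs_sub_comm] at this
    linarith [hω.1]
  have hAD : ∑ u ∈ range (n + 1), (#(A u ∩ D u) : ℝ) ≤ M :=
    sum_card_inter_le_of_card_inter_mul_eq ((Nat.cast_nonneg _).trans (hM 0 n.zero_le)) hdisj
      (fun u _ => card_firstPassage_inter_mul_card_eq f (3 * b ≤ |·|) (2 * b ≤ |·|) u)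
      fun u hu => hM u (Nat.lt_succ_iff.1 (mem_range.1 hu))
  calc (#{ω : Fin n → α | ∃ u ≤ n, p u ω} : ℝ) ≤ ∑ u ∈ range (n + 1), (#(A u) : ℝ) := by
        exact_mod_cast (card_le_card (filter_exists_le_subset_biUnion_firstPassage p n)).trans
          card_biUnion_le
    _ ≤ ∑ u ∈ range (n + 1), ((#(A u ∩ B) : ℝ) + #(A u ∩ D u)) := by
        gcongr with u; exact_mod_cast (card_le_card (hsplit u)).trans (card_union_le _ _)
    _ ≤ #B + M := by
        rw [sum_add_distrib]
        gcongr
        exact_mod_cast sum_card_inter_le_card hdisj B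

end PartialSum

theorem sum_le_tsum_of_card_le_mul {Ω : Type*} [Fintype Ω] {Y : Ω → ℝ} (hY : ∀ ω, 0 ≤ Y ω)
    {g : ℝ → ℝ} (hg : MonotoneOn g (Set.Ici 0)) (hg0 : ∀ y, 0 ≤ g y) {a : ℕ → ℝ}
    (ha : Summable a) (h : ∀ j : ℕ, #{ω | (j : ℝ) ≤ Y ω} * g (j + 1) ≤ a j) :
    ∑ ω, g (Y ω) ≤ ∑' j, a j := by
  set F : Ω → ℕ := fun ω => ⌊Y ω⌋₊
  have hfiber (j : ℕ) : ∑ ω with F ω = j, g (Y ω) ≤ #{ω | (j : ℝ) ≤ Y ω} * g (j + 1) := by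
    calc ∑ ω with F ω = j, g (Y ω) ≤ ∑ ω with F ω = j, g (j + 1) := by
          refine sum_le_sum fun ω hω => hg (hY ω) (Set.mem_Ici.2 (by positivity)) ?_
          rw [mem_filter] at hω
          exact hω.2 ▸ (Nat.lt_floor_add_one (Y ω)).le
      _ ≤ #{ω | (j : ℝ) ≤ Y ω} * g (j + 1) := by
          rw [sum_const, nsmul_eq_mul]
          refine mul_le_mul_of_nonneg_right ?_ (hg0 _)
          refine Nat.cast_le.2 (card_le_card fun ω hω => ?_)
          simp only [mem_filter, mem_univ, true_and] at hω ⊢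
          exact hω ▸ Nat.floor_le (hY ω)
  calc ∑ ω, g (Y ω) = ∑ j ∈ univ.image F, ∑ ω with F ω = j, g (Y ω) :=
        (sum_fiberwise_of_maps_to (fun ω _ => mem_image_of_mem F (mem_univ ω)) _).symm
    _ ≤ ∑ j ∈ univ.image F, a j := sum_le_sum fun j _ => (hfiber j).trans (h j)
    _ ≤ ∑' j, a j := ha.sum_le_tsum _ fun j _ =>
        (mul_nonneg (Nat.cast_nonneg _) (hg0 _)).trans (h j)

theorem exists_mul_rpow_le_mul_sq_add {c ε r : ℝ} (hc : 0 ≤ c) (hε : 0 < ε) (hr0 : 0 ≤ r)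
    (hr2 : r < 2) : ∃ C, ∀ y, 0 ≤ y → c * y ^ r ≤ ε * y ^ 2 + C := by
  set y₀ := (c / ε) ^ (2 - r)⁻¹
  have hy₀ : 0 ≤ y₀ := by positivity
  refine ⟨c * y₀ ^ r, fun y hy => ?_⟩
  rcases le_total y y₀ with h | h
  · have := mul_le_mul_of_nonneg_left (rpow_le_rpow hy h hr0) hc
    nlinarith [sq_nonneg y]
  · -- beyond `y₀` the ratio `y ^ 2 / y ^ r = y ^ (2 - r)` exceeds `c / ε`
    have hc' : c ≤ ε * y ^ (2 - r) := by
      have := rpow_le_rpow hy₀ h (by linarith : 0 ≤ 2 - r)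
      rw [rpow_inv_rpow (by positivity) (by linarith)] at this
      rwa [div_le_iff₀' hε] at this
    have hsq : y ^ (2 - r) * y ^ r = y ^ 2 := by
      rw [← rpow_add' hy (by norm_num), sub_add_cancel, rpow_two]
    have := mul_le_mul_of_nonneg_right hc' (rpow_nonneg hy r)
    nlinarith [rpow_nonneg hy₀ r]

theorem exists_mul_add_one_rpow_add_le {c a r : ℝ} (hc : 0 ≤ c) (ha : 0 < a) (hr0 : 0 ≤ r)
    (hr2 : r < 2) : ∃ C, ∀ x, 0 ≤ x → c * (x + 1) ^ r + x ≤ a * x ^ 2 + C := by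
  obtain ⟨C₁, hC₁⟩ := exists_mul_rpow_le_mul_sq_add hc (by positivity : 0 < a / 4) hr0 hr2
  obtain ⟨C₂, hC₂⟩ := exists_mul_rpow_le_mul_sq_add zero_le_one (by positivity : 0 < a / 2)
    zero_le_one one_lt_two
  refine ⟨C₁ + C₂ + a / 2, fun x hx => ?_⟩
  have h₁ := hC₁ (x + 1) (by positivity)
  have h₂ := hC₂ x hx
  rw [rpow_one, one_mul] at h₂
  nlinarith [sq_nonneg (x - 1)]

def lazyStep (k : Fin 3) : ℝ := (k : ℕ) - 1

theorem sum_exp_mul_lazyStep_le (l : ℝ) : ∑ k, exp (l * lazyStep k) ≤ 3 * exp (l ^ 2 / 2) := by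
  have hsum : ∑ k, exp (l * lazyStep k) = 2 * cosh l + 1 := by
    simp only [Fin.sum_univ_three, lazyStep, cosh_eq]
    norm_num
    ring
  rw [hsum]
  linarith [cosh_le_exp_half_sq l, one_le_exp (by positivity : 0 ≤ l ^ 2 / 2)]

theorem sum_exp_mul_sum_lazyStep_le {n : ℕ} (T : Finset (Fin n)) (l : ℝ) :
    ∑ ω : Fin n → Fin 3, exp (l * ∑ j ∈ T, lazyStep (ω j)) ≤ 3 ^ n * exp (l ^ 2 * n / 2) := by
  set F : Fin n → Fin 3 → ℝ := fun j k => if j ∈ T then exp (l * lazyStep k) else 1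
  have hF : ∀ j, ∑ k, F j k ≤ 3 * exp (l ^ 2 / 2) := by
    intro j
    by_cases hj : j ∈ T
    · simpa [F, hj] using sum_exp_mul_lazyStep_le l
    · simpa [F, hj] using one_le_exp (by positivity : 0 ≤ l ^ 2 / 2)
  calc ∑ ω : Fin n → Fin 3, exp (l * ∑ j ∈ T, lazyStep (ω j))
      = ∑ ω : Fin n → Fin 3, ∏ j, F j (ω j) := by
        refine sum_congr rfl fun ω _ => ?_
        rw [mul_sum, exp_sum, prod_ite_mem, univ_inter]
    _ = ∏ j, ∑ k, F j k := (Fintype.prod_sum F).symm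
    _ ≤ ∏ _j : Fin n, 3 * exp (l ^ 2 / 2) :=
        prod_le_prod (fun j _ => sum_nonneg fun k _ => by positivity) fun j _ => hF j
    _ = 3 ^ n * exp (l ^ 2 * n / 2) := by
        rw [prod_const, card_univ, Fintype.card_fin, mul_pow, ← exp_nat_mul]
        ring_nf

theorem card_le_abs_sum_lazyStep_le {n : ℕ} (T : Finset (Fin n)) {s b : ℝ} (hs : 0 < s)
    (hns : n ≤ s) (hb : 0 ≤ b) :
    (#{ω : Fin n → Fin 3 | b ≤ |∑ j ∈ T, lazyStep (ω j)|} : ℝ)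
      ≤ 2 * 3 ^ n * exp (-(b ^ 2 / (2 * s))) := by
  set X : (Fin n → Fin 3) → ℝ := fun ω => ∑ j ∈ T, lazyStep (ω j)
  set l := b / s
  have one_sided (σ : ℝ) (hσ : σ ^ 2 = 1) :
      (#{ω | b ≤ σ * X ω} : ℝ) ≤ 3 ^ n * exp (-(b ^ 2 / (2 * s))) := by
    calc (#{ω | b ≤ σ * X ω} : ℝ) ≤ exp (-(l * b)) * ∑ ω, exp (l * (σ * X ω)) :=
          card_le_exp_mul_sum_exp _ (by positivity) b
      _ ≤ exp (-(l * b)) * (3 ^ n * exp ((l * σ) ^ 2 * n / 2)) := by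
          simpa only [mul_assoc] using
            mul_le_mul_of_nonneg_left (sum_exp_mul_sum_lazyStep_le T (l * σ)) (exp_nonneg _)
      _ ≤ exp (-(l * b)) * (3 ^ n * exp (l ^ 2 * s / 2)) := by
          rw [mul_pow, hσ, mul_one]
          gcongr
      _ = 3 ^ n * exp (-(b ^ 2 / (2 * s))) := by
          rw [mul_left_comm, ← exp_add]
          congr 2
          simp only [l]
          field_simp
          ring
  calc (#{ω | b ≤ |X ω|} : ℝ) ≤ #{ω | b ≤ 1 * X ω} + #{ω | b ≤ -1 * X ω} := by
        simp only [le_abs, one_mul, neg_one_mul, filter_or]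
        exact_mod_cast card_union_le _ _
    _ ≤ 2 * 3 ^ n * exp (-(b ^ 2 / (2 * s))) := by
        linarith [one_sided 1 (by norm_num), one_sided (-1) (by norm_num)]

theorem lazyPath_zero_eq_partialSum {θ : ℕ} (ω : Fin θ → Fin 3) (u : ℕ) :
    (lazyPath θ 0 ω u : ℝ) = partialSum lazyStep ω u := by
  rw [lazyPath, partialSum, sum_filter, zero_add, Int.cast_sum]
  refine sum_congr rfl fun j _ => ?_
  split_ifs <;> simp [lazyStep]

theorem pathRange_nonneg (θ : ℕ) (x : ℤ) (ω : Fin θ → Fin 3) : 0 ≤ pathRange θ x ω :=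
  sub_nonneg.2 ((inf'_le _ (mem_range.2 θ.succ_pos)).trans (le_sup' _ (mem_range.2 θ.succ_pos)))

theorem exists_pathRange_le_two_mul_abs (θ : ℕ) (x : ℤ) (ω : Fin θ → Fin 3) :
    ∃ u ≤ θ, pathRange θ x ω ≤ 2 * |lazyPath θ x ω u - x| := by
  obtain ⟨u₁, hu₁, hmax⟩ := exists_mem_eq_sup' nonempty_range_add_one (lazyPath θ x ω)
  obtain ⟨u₂, hu₂, hmin⟩ := exists_mem_eq_inf' nonempty_range_add_one (lazyPath θ x ω)
  rw [mem_range, Nat.lt_succ_iff] at hu₁ hu₂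
  have hR : pathRange θ x ω ≤ |lazyPath θ x ω u₁ - x| + |lazyPath θ x ω u₂ - x| := by
    rw [pathRange, hmax, hmin]
    linarith [le_abs_self (lazyPath θ x ω u₁ - x), neg_abs_le (lazyPath θ x ω u₂ - x)]
  rcases le_total |lazyPath θ x ω u₁ - x| |lazyPath θ x ω u₂ - x| with h | h
  exacts [⟨u₂, hu₂, by linarith⟩, ⟨u₁, hu₁, by linarith⟩]

theorem card_le_pathRange_le {θ : ℕ} {s x : ℝ} (hs : 0 < s) (hθs : θ ≤ s) (hx : 0 ≤ x) :
    (#{ω : Fin θ → Fin 3 | x ≤ pathRange θ 0 ω} : ℝ) ≤ 4 * 3 ^ θ * exp (-(x ^ 2 / (72 * s))) := by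
  have hsub : ({ω | x ≤ pathRange θ 0 ω} : Finset (Fin θ → Fin 3))
      ⊆ ({ω | ∃ u ≤ θ, 3 * (x / 6) ≤ |partialSum lazyStep ω u|} : Finset _) := by
    intro ω hω
    simp only [mem_filter, mem_univ, true_and] at hω ⊢
    obtain ⟨u, hu, hR⟩ := exists_pathRange_le_two_mul_abs θ 0 ω
    rw [sub_zero] at hR
    refine ⟨u, hu, ?_⟩
    rw [← lazyPath_zero_eq_partialSum]
    have : (pathRange θ 0 ω : ℝ) ≤ 2 * |(lazyPath θ 0 ω u : ℝ)| := by exact_mod_cast hR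
    linarith
  have htail (u : ℕ) (_ : u ≤ θ) :
      (#{ω : Fin θ → Fin 3 | 2 * (x / 6) ≤
        |partialSum lazyStep ω θ - partialSum lazyStep ω u|} : ℝ)
        ≤ 2 * 3 ^ θ * exp (-((x / 3) ^ 2 / (2 * s))) := by
    simp only [partialSum_length_sub, show 2 * (x / 6) = x / 3 by ring]
    exact card_le_abs_sum_lazyStep_le _ hs hθs (by positivity)
  calc (#{ω : Fin θ → Fin 3 | x ≤ pathRange θ 0 ω} : ℝ)
      ≤ #{ω : Fin θ → Fin 3 | ∃ u ≤ θ, 3 * (x / 6) ≤ |partialSum lazyStep ω u|} := by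
        exact_mod_cast card_le_card hsub
    _ ≤ #{ω : Fin θ → Fin 3 | x / 6 ≤ |partialSum lazyStep ω θ|}
        + 2 * 3 ^ θ * exp (-((x / 3) ^ 2 / (2 * s))) :=
        card_exists_le_abs_partialSum_le lazyStep (x / 6) _ htail
    _ ≤ 2 * 3 ^ θ * exp (-((x / 6) ^ 2 / (2 * s)))
        + 2 * 3 ^ θ * exp (-((x / 3) ^ 2 / (2 * s))) := by
        gcongr
        exact card_le_abs_sum_lazyStep_le _ hs hθs (by positivity)
    _ ≤ 4 * 3 ^ θ * exp (-(x ^ 2 / (72 * s))) := by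
        have h3 : (x / 3) ^ 2 / (2 * s) = 4 * (x ^ 2 / (72 * s)) := by field_simp; ring
        have h6 : (x / 6) ^ 2 / (2 * s) = x ^ 2 / (72 * s) := by field_simp; ring
        have : exp (-((x / 3) ^ 2 / (2 * s))) ≤ exp (-(x ^ 2 / (72 * s))) := by
          rw [h3]; gcongr; linarith [show 0 ≤ x ^ 2 / (72 * s) by positivity]
        rw [h6]
        nlinarith [pow_pos (three_pos (α := ℝ)) θ]

/-- Uniform (in `m ≥ 1`) exponential moment bound for `c·(R_θ/m)^r`,
`0 < r < 2`, where `R_θ` is the range of the lazy random walk of length `θ = ⌊m²t⌋`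
started at `0`.  The expectation is the sum over all increment sequences divided
by `3^θ`. -/
theorem range_uniform_exponential_moments :
    ∀ t : ℝ, 0 < t → ∀ c : ℝ, 0 < c → ∀ r : ℝ, 0 < r → r < 2 →
      ∃ K : ℝ, ∀ m : ℝ, 1 ≤ m →
        (∑ ω : Fin ⌊m ^ 2 * t⌋₊ → Fin 3,
            Real.exp (c * ((pathRange ⌊m ^ 2 * t⌋₊ 0 ω : ℝ) / m) ^ r))
          / 3 ^ ⌊m ^ 2 * t⌋₊ ≤ K := by
  intro t ht c hc r hr0 hr2
  obtain ⟨C, hC⟩ := exists_mul_add_one_rpow_add_le hc.le (by positivity : 0 < 1 / (72 * t))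
    hr0.le hr2
  refine ⟨4 * exp C * ∑' j : ℕ, exp (-j), fun m hm => ?_⟩
  set θ := ⌊m ^ 2 * t⌋₊
  have hm0 : 0 < m := one_pos.trans_le hm
  have hθ : (θ : ℝ) ≤ m ^ 2 * t := Nat.floor_le (by positivity)
  rw [div_le_iff₀ (by positivity), mul_comm, ← tsum_mul_left, ← tsum_mul_left]
  refine sum_le_tsum_of_card_le_mul
    (fun ω => div_nonneg (mod_cast pathRange_nonneg θ 0 ω) hm0.le)
    (fun y hy z _ hyz =>
      exp_le_exp.2 (mul_le_mul_of_nonneg_left (rpow_le_rpow hy hyz hr0.le) hc.le))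
    (fun y => (exp_pos _).le) ((summable_exp_neg_nat.mul_left _).mul_left _) fun j => ?_
  have htail := card_le_pathRange_le (x := j * m) (by positivity : 0 < m ^ 2 * t) hθ
    (by positivity)
  have hj : (j * m) ^ 2 / (72 * (m ^ 2 * t)) = j ^ 2 / (72 * t) := by field_simp
  simp only [le_div_iff₀ hm0]
  calc (#{ω : Fin θ → Fin 3 | j * m ≤ pathRange θ 0 ω} : ℝ) * exp (c * (j + 1) ^ r)
      ≤ 4 * 3 ^ θ * exp (-((j * m) ^ 2 / (72 * (m ^ 2 * t)))) * exp (c * (j + 1) ^ r) := by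
        gcongr
    _ = 4 * 3 ^ θ * exp (c * (j + 1) ^ r - j ^ 2 / (72 * t)) := by
        rw [hj, mul_assoc, ← exp_add, neg_add_eq_sub]
    _ ≤ 4 * 3 ^ θ * exp (C + -j) := by
        gcongr
        linarith [hC j j.cast_nonneg, show 1 / (72 * t) * (j : ℝ) ^ 2 = j ^ 2 / (72 * t) by ring]
    _ = 3 ^ θ * (4 * exp C * exp (-j)) := by
        rw [exp_add]; ring
end

section
/- Let (Ω, μ) be a probability space and let X : Ω → ℝ be a nonnegative random variable such that E[X^q] ≤ C^q · √(q!) for every positive integer q, where C > 0 is a fixed constant. Then for every real r with 0 < r < 2 and every c > 0, one has E[ exp( c · X^r ) ] < ∞. -/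
open MeasureTheory

lemma fact_two_mul_le (n : ℕ) : Nat.factorial (2 * n) ≤ 4 ^ n * (Nat.factorial n)^2 := by
  induction n with
  | zero => simp
  | succ n ih =>
    have h : 2 * (n+1) = (2*n) + 1 + 1 := by ring
    rw [h, Nat.factorial_succ, Nat.factorial_succ]
    calc (2*n+1+1) * ((2*n+1) * (2*n).factorial)
        ≤ (2*(n+1)) * ((2*(n+1)) * (4^n * n.factorial^2)) := by
          have h1 : 2*n+1 ≤ 2*(n+1) := by omega
          have h2 : 2*n+1+1 = 2*(n+1) := by omega
          rw [h2]
          exact Nat.mul_le_mul_left _ (Nat.mul_le_mul h1 ih)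
      _ = 4^(n+1) * ((n+1) * n.factorial)^2 := by ring
      _ = 4^(n+1) * (n+1).factorial^2 := by rw [Nat.factorial_succ]

lemma sqrt_fact_two_mul_le (n : ℕ) :
    Real.sqrt (Nat.factorial (2 * n)) ≤ 2 ^ n * Nat.factorial n := by
  have h4 := fact_two_mul_le n
  have h : ((2*n).factorial : ℝ) ≤ ((2:ℝ)^n * n.factorial)^2 := by
    have : (((2*n).factorial : ℕ) : ℝ) ≤ ((4^n * (n.factorial)^2 : ℕ) : ℝ) := by
      exact_mod_cast h4
    push_cast at this
    have h2 : ((2:ℝ)^n * n.factorial)^2 = 4^n * (n.factorial:ℝ)^2 := by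
      rw [mul_pow, sq ((2:ℝ)^n), ← mul_pow]
      norm_num
    linarith
  calc Real.sqrt (Nat.factorial (2*n)) ≤ Real.sqrt (((2:ℝ)^n * n.factorial)^2) :=
        Real.sqrt_le_sqrt h
    _ = 2^n * n.factorial := Real.sqrt_sq (by positivity)

lemma poly_bound (c r t : ℝ) (hc : 0 < c) (hr : 0 < r) (hr2 : r < 2) (ht : 0 < t) :
    ∃ K : ℝ, 0 ≤ K ∧ ∀ x : ℝ, 0 ≤ x → c * x ^ r ≤ t * x ^ (2:ℕ) + K := by
  set M : ℝ := max 1 ((c/t) ^ (1/(2-r))) with hM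
  have hM1 : (1:ℝ) ≤ M := le_max_left _ _
  have hM0 : 0 < M := lt_of_lt_of_le one_pos hM1
  refine ⟨c * M ^ r, ?_, ?_⟩
  · positivity
  intro x hx
  rcases le_total x M with hxM | hMx
  · have h1 : x ^ r ≤ M ^ r := Real.rpow_le_rpow hx hxM hr.le
    nlinarith [sq_nonneg x, mul_le_mul_of_nonneg_left h1 hc.le]
  · have hx0 : (0:ℝ) < x := lt_of_lt_of_le hM0 hMx
    have h1 : x ^ (r-2) ≤ M ^ (r-2) :=
      Real.rpow_le_rpow_of_nonpos hM0 hMx (by linarith)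
    have hct : 0 ≤ c / t := by positivity
    have h2 : c / t ≤ M ^ (2-r) := by
      calc c / t = ((c/t) ^ (1/(2-r))) ^ (2-r) := by
            rw [← Real.rpow_mul hct, one_div, inv_mul_cancel₀ (by linarith : (2:ℝ)-r ≠ 0), Real.rpow_one]
        _ ≤ M ^ (2-r) := Real.rpow_le_rpow (Real.rpow_nonneg hct _) (le_max_right _ _) (by linarith)
    have hMr2 : M ^ (r-2) = (M ^ (2-r))⁻¹ := by
      rw [show r - 2 = -(2-r) by ring, Real.rpow_neg hM0.le]
    have h3 : c * M ^ (r-2) ≤ t := by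
      rw [hMr2]
      rw [div_le_iff₀ ht] at h2
      have hMpos : 0 < M ^ (2-r) := Real.rpow_pos_of_pos hM0 _
      rw [mul_inv_le_iff₀ hMpos]
      linarith [h2]
    have hsplit : x ^ r = x ^ (r-2) * x ^ (2:ℕ) := by
      rw [← Real.rpow_natCast x 2, ← Real.rpow_add hx0]
      norm_num
    have hx2 : 0 ≤ x ^ (2:ℕ) := by positivity
    have : c * x ^ r ≤ t * x ^ (2:ℕ) := by
      rw [hsplit, ← mul_assoc]
      apply mul_le_mul_of_nonneg_right _ hx2
      calc c * x ^ (r-2) ≤ c * M ^ (r-2) :=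
            mul_le_mul_of_nonneg_left h1 hc.le
        _ ≤ t := h3
    have hK : 0 ≤ c * M ^ r := by positivity
    linarith


/-- If a nonnegative random variable `X` on a probability space
satisfies `E[X^q] ≤ C^q √(q!)` for all integers `q ≥ 1`, then `E[exp(c X^r)] < ∞`
for every `0 < r < 2` and every `c > 0`. -/
theorem exp_moment_finite_of_moment_bound {Ω : Type*} [MeasurableSpace Ω]
    (μ : Measure Ω) [IsProbabilityMeasure μ]
    (X : Ω → ℝ) (hXmeas : Measurable X) (hXnonneg : ∀ ω, 0 ≤ X ω)
    (C : ℝ) (hC : 0 < C)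
    (hmom : ∀ q : ℕ, 0 < q →
      ∫⁻ ω, ENNReal.ofReal (X ω ^ q) ∂μ ≤
        ENNReal.ofReal (C ^ q * Real.sqrt (Nat.factorial q))) :
    ∀ r : ℝ, 0 < r → r < 2 → ∀ c : ℝ, 0 < c →
      ∫⁻ ω, ENNReal.ofReal (Real.exp (c * X ω ^ r)) ∂μ < ⊤ := by
  intro r hr hr2 c hc
  set t : ℝ := 1/(4*C^2) with ht_def
  have ht : 0 < t := by rw [ht_def]; positivity
  have h3t : t * C^2 * 2 = 1/2 := by rw [ht_def]; field_simp; ring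
  clear_value t
  obtain ⟨K, hK0, hK⟩ := poly_bound c r t hc hr hr2 ht
  -- the key integral
  have hI : ∫⁻ ω, ENNReal.ofReal (Real.exp (t * X ω ^ (2:ℕ))) ∂μ < ⊤ := by
    have hexp_eq : ∀ ω, ENNReal.ofReal (Real.exp (t * X ω ^ (2:ℕ))) =
        ∑' n : ℕ, ENNReal.ofReal ((t * X ω ^ (2:ℕ))^n / n.factorial) := by
      intro ω
      have hy : (0:ℝ) ≤ t * X ω ^ (2:ℕ) := by positivity
      rw [Real.exp_eq_exp_ℝ, NormedSpace.exp_eq_tsum_div]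
      exact ENNReal.ofReal_tsum_of_nonneg (fun n => by positivity)
        (Real.summable_pow_div_factorial _)
    have hterm : ∀ n : ℕ, ∫⁻ ω, ENNReal.ofReal ((t * X ω ^ (2:ℕ))^n / n.factorial) ∂μ ≤
        ENNReal.ofReal ((1/2:ℝ)^n) := by
      intro n
      have hrw : ∀ x : ℝ, (t * x ^ (2:ℕ))^n / (n.factorial : ℝ) =
          (t^n / n.factorial) * x ^ (2*n) := by
        intro x
        rw [mul_pow, pow_mul]
        ring
      have hconst : (0:ℝ) ≤ t^n / n.factorial := by positivity
      have heq : ∫⁻ ω, ENNReal.ofReal ((t * X ω ^ (2:ℕ))^n / n.factorial) ∂μ =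
          ENNReal.ofReal (t^n / n.factorial) * ∫⁻ ω, ENNReal.ofReal (X ω ^ (2*n)) ∂μ := by
        simp_rw [hrw, ENNReal.ofReal_mul hconst]
        exact lintegral_const_mul' _ _ ENNReal.ofReal_ne_top
      rw [heq]
      rcases Nat.eq_zero_or_pos n with hn | hn
      · subst hn
        simp
      · calc ENNReal.ofReal (t^n / n.factorial) * ∫⁻ ω, ENNReal.ofReal (X ω ^ (2*n)) ∂μ
            ≤ ENNReal.ofReal (t^n / n.factorial) *
              ENNReal.ofReal (C ^ (2*n) * Real.sqrt (Nat.factorial (2*n))) :=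
              mul_le_mul_right (hmom (2*n) (by omega)) _
          _ = ENNReal.ofReal (t^n / n.factorial * (C ^ (2*n) * Real.sqrt (Nat.factorial (2*n)))) := by
              rw [ENNReal.ofReal_mul hconst]
          _ ≤ ENNReal.ofReal ((1/2:ℝ)^n) := by
              apply ENNReal.ofReal_le_ofReal
              have hs := sqrt_fact_two_mul_le n
              have hfac : (0:ℝ) < n.factorial := by exact_mod_cast Nat.factorial_pos n
              have h1 : t^n / n.factorial * (C ^ (2*n) * Real.sqrt (Nat.factorial (2*n)))
                  ≤ t^n / n.factorial * (C ^ (2*n) * (2^n * n.factorial)) := by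
                apply mul_le_mul_of_nonneg_left _ (by positivity)
                exact mul_le_mul_of_nonneg_left hs (by positivity)
              have h2 : t^n / n.factorial * (C ^ (2*n) * (2^n * (n.factorial:ℝ)))
                  = (t * C^2 * 2)^n := by
                rw [pow_mul]
                field_simp
                ring
              rw [h3t] at h2
              linarith
    have hmeas : ∀ n : ℕ, AEMeasurable
        (fun ω => ENNReal.ofReal ((t * X ω ^ (2:ℕ))^n / n.factorial)) μ := by
      intro n
      apply Measurable.aemeasurable
      exact (((measurable_const.mul (hXmeas.pow_const 2)).pow_const n).div_const _).ennreal_ofReal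
    calc ∫⁻ ω, ENNReal.ofReal (Real.exp (t * X ω ^ (2:ℕ))) ∂μ
        = ∑' n : ℕ, ∫⁻ ω, ENNReal.ofReal ((t * X ω ^ (2:ℕ))^n / n.factorial) ∂μ := by
          simp_rw [hexp_eq]
          exact lintegral_tsum hmeas
      _ ≤ ∑' n : ℕ, ENNReal.ofReal ((1/2:ℝ)^n) := ENNReal.tsum_le_tsum hterm
      _ = ENNReal.ofReal (∑' n : ℕ, (1/2:ℝ)^n) :=
          (ENNReal.ofReal_tsum_of_nonneg (fun n => by positivity)
            (summable_geometric_of_lt_one (by norm_num) (by norm_num))).symm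
      _ < ⊤ := ENNReal.ofReal_lt_top
  -- pointwise comparison
  have hpt : ∀ ω, ENNReal.ofReal (Real.exp (c * X ω ^ r)) ≤
      ENNReal.ofReal (Real.exp K) * ENNReal.ofReal (Real.exp (t * X ω ^ (2:ℕ))) := by
    intro ω
    rw [← ENNReal.ofReal_mul (Real.exp_pos K).le, ← Real.exp_add]
    apply ENNReal.ofReal_le_ofReal
    apply Real.exp_le_exp.mpr
    have := hK (X ω) (hXnonneg ω)
    linarith
  calc ∫⁻ ω, ENNReal.ofReal (Real.exp (c * X ω ^ r)) ∂μ
      ≤ ∫⁻ ω, ENNReal.ofReal (Real.exp K) * ENNReal.ofReal (Real.exp (t * X ω ^ (2:ℕ))) ∂μ :=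
        lintegral_mono hpt
    _ = ENNReal.ofReal (Real.exp K) * ∫⁻ ω, ENNReal.ofReal (Real.exp (t * X ω ^ (2:ℕ))) ∂μ :=
        lintegral_const_mul' _ _ ENNReal.ofReal_ne_top
    _ < ⊤ := ENNReal.mul_lt_top ENNReal.ofReal_lt_top hI
end
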